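/- arXiv:2504.21597 — 2 statements merged into one kernel-verified Lean document; each statement's English description precedes it below -/
import Mathlib

section
/- Let Ω ⊂ ℝ³ be an open, convex, bounded set. Then |Ω| ≥ (π/3) · r_in(Ω)² · diam(Ω), where r_in(Ω) is the inradius of Ω (the supremum of radii of balls contained in Ω) and diam(Ω) is the diameter of Ω. -/
/-!
Suppose `Ω` contains the closed ball of radius `s` about `z`, and let `x, y ∈ Ω`. Let `u` be the
unit vector along `x - y` and `D` the disc of radius `s` centred at `z` orthogonal to `u`. By
convexity `Ω` contains the cones over `D` with apexes `x` and `y`, of volumes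
`π s² |⟪u, x - z⟫| / 3` and `π s² |⟪u, y - z⟫| / 3`. If `z` lies between `x` and `y` along `u`,
the cones lie on opposite sides of the plane of `D` and their heights add up to `|x - y|`;
otherwise one cone alone is high enough. Hence `|Ω| ≥ π s² |x - y| / 3`, and it remains to let
`|x - y| → diam Ω` and `s → r_in(Ω)`.

Each cone is an affine image of `{0 ≤ q₀ ≤ 1, q₁² + q₂² ≤ (1 - q₀)²}`, whose volume `π / 3`
comes from Fubini over the discs `q₀ = t`.
-/

open MeasureTheory Metric Real
open scoped RealInnerProductSpace

def unitCone : Set (EuclideanSpace ℝ (Fin 3)) :=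
  {q | 0 ≤ q 0 ∧ q 0 ≤ 1 ∧ q 1 ^ 2 + q 2 ^ 2 ≤ (1 - q 0) ^ 2}

def unitConeProd : Set (ℝ × (Fin 2 → ℝ)) :=
  {p | 0 ≤ p.1 ∧ p.1 ≤ 1 ∧ p.2 0 ^ 2 + p.2 1 ^ 2 ≤ (1 - p.1) ^ 2}

theorem isClosed_unitConeProd : IsClosed unitConeProd := by
  simp only [unitConeProd, Set.ofPred_and]
  refine .inter ?_ (.inter ?_ ?_) <;> exact isClosed_le (by fun_prop) (by fun_prop)

theorem ofReal_pi_mul_sq_le_volume_unitConeProd_slice {t : ℝ} (ht : t ∈ Set.Icc (0 : ℝ) 1) :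
    ENNReal.ofReal (π * (1 - t) ^ 2) ≤ volume (Prod.mk t ⁻¹' unitConeProd) := by
  have hball : ball (0 : EuclideanSpace ℝ (Fin 2)) (1 - t) ⊆
      (MeasurableEquiv.toLp 2 (Fin 2 → ℝ)).symm ⁻¹' (Prod.mk t ⁻¹' unitConeProd) := by
    intro w hw
    rw [EuclideanSpace.ball_zero_eq _ (by linarith [ht.2])] at hw
    simp only [Set.mem_ofPred_eq, Fin.sum_univ_two] at hw
    exact ⟨ht.1, ht.2, by simpa using hw.le⟩
  have hvol : volume (ball (0 : EuclideanSpace ℝ (Fin 2)) (1 - t)) =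
      ENNReal.ofReal (π * (1 - t) ^ 2) := by
    rw [EuclideanSpace.volume_ball_fin_two, ← ENNReal.ofReal_pow (by linarith [ht.2]),
      ← ENNReal.ofReal_mul (by positivity), mul_comm]
  rw [← hvol,
    ← (EuclideanSpace.volume_preserving_symm_measurableEquiv_toLp (Fin 2)).measure_preimage
      (isClosed_unitConeProd.preimage (by fun_prop)).measurableSet.nullMeasurableSet]
  exact measure_mono hball

theorem ofReal_pi_div_three_le_volume_unitConeProd :
    ENNReal.ofReal (π / 3) ≤ volume unitConeProd := by
  have hint : ∫ t in (0 : ℝ)..1, π * (1 - t) ^ 2 = π / 3 := by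
    rw [intervalIntegral.integral_const_mul,
      intervalIntegral.integral_comp_sub_left (fun x => x ^ 2) 1]
    norm_num [integral_pow]
    ring
  rw [Measure.volume_eq_prod, Measure.prod_apply isClosed_unitConeProd.measurableSet,
    ← hint, intervalIntegral.integral_of_le zero_le_one, ofReal_integral_eq_lintegral_ofReal
      (by fun_prop : Continuous fun t : ℝ => π * (1 - t) ^ 2).integrableOn_Ioc
      (.of_forall fun t => by positivity)]
  calc ∫⁻ t in Set.Ioc 0 1, ENNReal.ofReal (π * (1 - t) ^ 2)
      ≤ ∫⁻ t in Set.Ioc 0 1, volume (Prod.mk t ⁻¹' unitConeProd) :=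
        setLIntegral_mono' measurableSet_Ioc fun t ht =>
          ofReal_pi_mul_sq_le_volume_unitConeProd_slice (Set.Ioc_subset_Icc_self ht)
    _ ≤ ∫⁻ t, volume (Prod.mk t ⁻¹' unitConeProd) := setLIntegral_le_lintegral _ _

theorem ofReal_pi_div_three_le_volume_unitCone :
    ENNReal.ofReal (π / 3) ≤ volume unitCone := by
  have hpre : unitCone = (MeasurableEquiv.toLp 2 (Fin 3 → ℝ)).symm ⁻¹'
      (MeasurableEquiv.piFinSuccAbove (fun _ : Fin 3 => ℝ) 0 ⁻¹' unitConeProd) := rfl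
  rw [hpre, (EuclideanSpace.volume_preserving_symm_measurableEquiv_toLp (Fin 3)).measure_preimage
      (isClosed_unitConeProd.measurableSet.preimage
        (MeasurableEquiv.measurable _)).nullMeasurableSet,
    (volume_preserving_piFinSuccAbove (fun _ : Fin 3 => ℝ) 0).measure_preimage_equiv]
  exact ofReal_pi_div_three_le_volume_unitConeProd

theorem isCompact_unitCone : IsCompact unitCone := by
  refine isCompact_of_isClosed_isBounded ?_
    ((isBounded_iff_subset_closedBall 0).2 ⟨2, fun q ⟨h₀, h₁, h₂⟩ => ?_⟩)
  · simp only [unitCone, Set.ofPred_and]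
    refine .inter ?_ (.inter ?_ ?_) <;> exact isClosed_le (by fun_prop) (by fun_prop)
  rw [mem_closedBall_zero_iff, EuclideanSpace.norm_eq, Real.sqrt_le_left (by norm_num),
    Fin.sum_univ_three]
  simp only [Real.norm_eq_abs, sq_abs]
  nlinarith

theorem Convex.add_smul_sub_add_mem {E : Type*} [NormedAddCommGroup E] [NormedSpace ℝ E]
    {Ω : Set E} (hΩ : Convex ℝ Ω) {z p w : E} {s t : ℝ} (hball : closedBall z s ⊆ Ω)
    (hp : p ∈ Ω) (ht₀ : 0 ≤ t) (ht₁ : t ≤ 1) (hw : ‖w‖ ≤ (1 - t) * s) :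
    z + t • (p - z) + w ∈ Ω := by
  rcases ht₁.eq_or_lt with rfl | ht₁
  · obtain rfl : w = 0 := norm_le_zero_iff.1 (by simpa using hw)
    simpa using hp
  have ht : 0 < 1 - t := sub_pos.2 ht₁
  -- the point lies on the segment from `p` to the point `z + (1 - t)⁻¹ • w` of the ball
  have hmem : z + (1 - t)⁻¹ • w ∈ closedBall z s := by
    rw [mem_closedBall, dist_eq_norm, add_sub_cancel_left, norm_smul, norm_inv,
      Real.norm_of_nonneg ht.le, inv_mul_le_iff₀ ht]
    exact hw
  convert hΩ hp (hball hmem) ht₀ ht.le (by ring) using 1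
  rw [smul_add, smul_smul, mul_inv_cancel₀ ht.ne', one_smul]
  module

def coneMatrix (s : ℝ) (c : EuclideanSpace ℝ (Fin 3)) : Matrix (Fin 3) (Fin 3) ℝ :=
  !![c 0, 0, 0; c 1, s, 0; c 2, 0, s]

theorem det_coneMatrix (s : ℝ) (c : EuclideanSpace ℝ (Fin 3)) :
    (coneMatrix s c).det = c 0 * s ^ 2 := by
  simp [coneMatrix, Matrix.det_fin_three]
  ring

section Cone

variable (b : OrthonormalBasis (Fin 3) ℝ (EuclideanSpace ℝ (Fin 3))) (s : ℝ)
  (z p : EuclideanSpace ℝ (Fin 3))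

/-- The cone with apex `p` over the disc of radius `s` centred at `z` and orthogonal to `b 0`. -/
def coneOverDisc : Set (EuclideanSpace ℝ (Fin 3)) :=
  (fun q => z + q 0 • (p - z) + s • (q 1 • b 1 + q 2 • b 2)) '' unitCone

theorem repr_symm_toLpLin_coneMatrix (q : EuclideanSpace ℝ (Fin 3)) :
    b.repr.symm (Matrix.toLpLin 2 2 (coneMatrix s (b.repr (p - z))) q) =
      q 0 • (p - z) + s • (q 1 • b 1 + q 2 • b 2) := by
  apply b.repr.injective
  rw [LinearIsometryEquiv.apply_symm_apply]
  ext i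
  fin_cases i <;>
    simp [coneMatrix, Matrix.toLpLin_apply, dotProduct, Fin.sum_univ_three, b.repr_self] <;> ring

theorem isCompact_coneOverDisc : IsCompact (coneOverDisc b s z p) :=
  isCompact_unitCone.image (by fun_prop)

theorem volume_coneOverDisc :
    volume (coneOverDisc b s z p) = ENNReal.ofReal (|⟪b 0, p - z⟫| * s ^ 2) * volume unitCone := by
  have hdet : LinearMap.det (Matrix.toLpLin 2 2 (coneMatrix s (b.repr (p - z)))) =
      (coneMatrix s (b.repr (p - z))).det := by
    rw [Matrix.toLpLin_eq_toLin, LinearMap.det_toLin]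
  set M := Matrix.toLpLin 2 2 (coneMatrix s (b.repr (p - z)))
  have himage : coneOverDisc b s z p = (z + ·) '' (b.repr.symm '' (M '' unitCone)) := by
    simp only [coneOverDisc, Set.image_image, repr_symm_toLpLin_coneMatrix, M, add_assoc]
  rw [himage, Set.image_add_left, measure_preimage_add, LinearIsometryEquiv.image_eq_preimage_symm,
    LinearIsometryEquiv.symm_symm, b.measurePreserving_repr.measure_preimage
      (isCompact_unitCone.image M.continuous_of_finiteDimensional).measurableSet.nullMeasurableSet,
    Measure.addHaar_image_linearMap, hdet, det_coneMatrix, b.repr_apply_apply, abs_mul,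
    abs_of_nonneg (sq_nonneg s)]

theorem ofReal_le_volume_coneOverDisc :
    ENNReal.ofReal (π / 3 * s ^ 2 * |⟪b 0, p - z⟫|) ≤ volume (coneOverDisc b s z p) := by
  calc ENNReal.ofReal (π / 3 * s ^ 2 * |⟪b 0, p - z⟫|)
      = ENNReal.ofReal (|⟪b 0, p - z⟫| * s ^ 2) * ENNReal.ofReal (π / 3) := by
        rw [← ENNReal.ofReal_mul (by positivity)]
        ring_nf
    _ ≤ volume (coneOverDisc b s z p) := by
        rw [volume_coneOverDisc]
        gcongr
        exact ofReal_pi_div_three_le_volume_unitCone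

theorem coneOverDisc_subset {Ω : Set (EuclideanSpace ℝ (Fin 3))} (hΩ : Convex ℝ Ω) (hs : 0 ≤ s)
    (hball : closedBall z s ⊆ Ω) (hp : p ∈ Ω) : coneOverDisc b s z p ⊆ Ω := by
  rintro _ ⟨q, ⟨hq₀, hq₁, hq⟩, rfl⟩
  refine hΩ.add_smul_sub_add_mem hball hp hq₀ hq₁ ?_
  have hperp : ⟪q 1 • b 1, q 2 • b 2⟫ = 0 := by
    simp [real_inner_smul_left, real_inner_smul_right, b.orthonormal.inner_eq_zero]
  have hnorm : ‖q 1 • b 1 + q 2 • b 2‖ ≤ 1 - q 0 := by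
    refine (pow_le_pow_iff_left₀ (norm_nonneg _) (by linarith) two_ne_zero).1 ?_
    rw [norm_add_sq_real, hperp, norm_smul, norm_smul, b.orthonormal.1 1, b.orthonormal.1 2]
    simpa using hq
  rw [norm_smul, Real.norm_of_nonneg hs, mul_comm]
  gcongr

theorem inner_sub_eq_of_mem_coneOverDisc {v : EuclideanSpace ℝ (Fin 3)}
    (hv : v ∈ coneOverDisc b s z p) : ∃ t, 0 ≤ t ∧ ⟪b 0, v - z⟫ = t * ⟪b 0, p - z⟫ := by
  obtain ⟨q, hq, rfl⟩ := hv
  refine ⟨q 0, hq.1, ?_⟩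
  rw [add_sub_right_comm, add_sub_cancel_left, inner_add_right, inner_smul_right, inner_smul_right,
    inner_add_right, inner_smul_right, inner_smul_right, b.orthonormal.inner_eq_zero (by decide),
    b.orthonormal.inner_eq_zero (by decide)]
  ring

end Cone

theorem MeasureTheory.Measure.addHaar_setOf_inner_sub_eq_zero {E : Type*} [NormedAddCommGroup E]
    [InnerProductSpace ℝ E] [FiniteDimensional ℝ E] [MeasurableSpace E] [BorelSpace E]
    (μ : Measure E) [μ.IsAddHaarMeasure] {u : E} (hu : u ≠ 0) (z : E) :
    μ {v | ⟪u, v - z⟫ = 0} = 0 := by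
  have hset : {v | ⟪u, v - z⟫ = 0} = (AffineSubspace.mk' z (ℝ ∙ u)ᗮ : Set E) := by
    ext v
    simp [AffineSubspace.mem_mk', Submodule.mem_orthogonal_singleton_iff_inner_right]
  rw [hset]
  refine Measure.addHaar_affineSubspace μ _ fun htop => hu ?_
  have hdir := congrArg AffineSubspace.direction htop
  rw [AffineSubspace.direction_mk', AffineSubspace.direction_top,
    Submodule.orthogonal_eq_top_iff, Submodule.span_singleton_eq_bot] at hdir
  exact hdir

theorem exists_orthonormalBasis_apply_eq {E ι : Type*} [NormedAddCommGroup E]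
    [InnerProductSpace ℝ E] [FiniteDimensional ℝ E] [Fintype ι]
    (hcard : Module.finrank ℝ E = Fintype.card ι) (i : ι) {u : E} (hu : ‖u‖ = 1) :
    ∃ b : OrthonormalBasis ι ℝ E, b i = u := by
  have hon : Orthonormal ℝ (({i} : Set ι).domRestrict fun _ => u) :=
    ⟨fun _ => hu, fun j k hjk => (hjk (Subsingleton.elim j k)).elim⟩
  obtain ⟨b, hb⟩ := hon.exists_orthonormalBasis_extension_of_card_eq hcard
  exact ⟨b, hb i rfl⟩

theorem ofReal_le_volume_coneOverDisc_union
    (b : OrthonormalBasis (Fin 3) ℝ (EuclideanSpace ℝ (Fin 3))) (s : ℝ)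
    (z x y : EuclideanSpace ℝ (Fin 3)) :
    ENNReal.ofReal (π / 3 * s ^ 2 * ⟪b 0, x - y⟫) ≤
      volume (coneOverDisc b s z x ∪ coneOverDisc b s z y) := by
  have hx := ofReal_le_volume_coneOverDisc b s z x
  have hy := ofReal_le_volume_coneOverDisc b s z y
  have hxy : ⟪b 0, x - y⟫ = ⟪b 0, x - z⟫ - ⟪b 0, y - z⟫ := by
    rw [← inner_sub_right, sub_sub_sub_cancel_right]
  rcases le_or_gt 0 ⟪b 0, y - z⟫ with hy₀ | hy₀
  · calc _ ≤ ENNReal.ofReal (π / 3 * s ^ 2 * |⟪b 0, x - z⟫|) := by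
          gcongr
          linarith [le_abs_self ⟪b 0, x - z⟫]
      _ ≤ _ := hx.trans (measure_mono Set.subset_union_left)
  rcases le_or_gt ⟪b 0, x - z⟫ 0 with hx₀ | hx₀
  · calc _ ≤ ENNReal.ofReal (π / 3 * s ^ 2 * |⟪b 0, y - z⟫|) := by
          gcongr
          linarith [neg_le_abs ⟪b 0, y - z⟫]
      _ ≤ _ := hy.trans (measure_mono Set.subset_union_right)
  -- now the two cones lie on opposite sides of the plane through `z` orthogonal to `b 0`
  have hdisj : AEDisjoint volume (coneOverDisc b s z x) (coneOverDisc b s z y) := by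
    refine measure_mono_null (fun v ⟨hvx, hvy⟩ => ?_)
      (Measure.addHaar_setOf_inner_sub_eq_zero volume (b.orthonormal.ne_zero 0) z)
    obtain ⟨t, ht, hvt⟩ := inner_sub_eq_of_mem_coneOverDisc b s z x hvx
    obtain ⟨t', ht', hvt'⟩ := inner_sub_eq_of_mem_coneOverDisc b s z y hvy
    exact le_antisymm (hvt' ▸ mul_nonpos_of_nonneg_of_nonpos ht' hy₀.le)
      (hvt ▸ mul_nonneg ht hx₀.le)
  calc _ = ENNReal.ofReal (π / 3 * s ^ 2 * |⟪b 0, x - z⟫|) +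
        ENNReal.ofReal (π / 3 * s ^ 2 * |⟪b 0, y - z⟫|) := by
        rw [← ENNReal.ofReal_add (by positivity) (by positivity), hxy, abs_of_pos hx₀,
          abs_of_neg hy₀]
        ring_nf
    _ ≤ _ := add_le_add hx hy
    _ = _ := (measure_union₀
      (isCompact_coneOverDisc b s z y).measurableSet.nullMeasurableSet hdisj).symm

theorem ofReal_pi_div_three_mul_sq_mul_dist_le_volume {Ω : Set (EuclideanSpace ℝ (Fin 3))}
    (hΩ : Convex ℝ Ω) {z x y : EuclideanSpace ℝ (Fin 3)} {s : ℝ} (hs : 0 ≤ s)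
    (hball : closedBall z s ⊆ Ω) (hx : x ∈ Ω) (hy : y ∈ Ω) :
    ENNReal.ofReal (π / 3 * s ^ 2 * dist x y) ≤ volume Ω := by
  rcases eq_or_ne x y with rfl | hxy
  · simp
  have hd : dist x y ≠ 0 := dist_ne_zero.2 hxy
  obtain ⟨b, hb⟩ := exists_orthonormalBasis_apply_eq (ι := Fin 3) (by simp) 0
    (u := (dist x y)⁻¹ • (x - y))
    (by rw [norm_smul, norm_inv, Real.norm_of_nonneg dist_nonneg, ← dist_eq_norm,
      inv_mul_cancel₀ hd])
  have hinner : ⟪b 0, x - y⟫ = dist x y := by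
    rw [hb, real_inner_smul_left, real_inner_self_eq_norm_sq, ← dist_eq_norm, sq,
      inv_mul_cancel_left₀ hd]
  calc _ = ENNReal.ofReal (π / 3 * s ^ 2 * ⟪b 0, x - y⟫) := by rw [hinner]
    _ ≤ _ := ofReal_le_volume_coneOverDisc_union b s z x y
    _ ≤ _ := measure_mono (Set.union_subset (coneOverDisc_subset b s z x hΩ hs hball hx)
      (coneOverDisc_subset b s z y hΩ hs hball hy))

theorem pi_div_three_mul_sq_mul_diam_le_toReal_volume {Ω : Set (EuclideanSpace ℝ (Fin 3))}
    (hΩ : Convex ℝ Ω) (hbdd : Bornology.IsBounded Ω) {z : EuclideanSpace ℝ (Fin 3)} {s : ℝ}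
    (hs : 0 < s) (hball : closedBall z s ⊆ Ω) :
    π / 3 * s ^ 2 * diam Ω ≤ (volume Ω).toReal := by
  have hdiam : diam Ω ≤ (volume Ω).toReal / (π / 3 * s ^ 2) :=
    diam_le_of_forall_dist_le (by positivity) fun x hx y hy => by
      rw [le_div_iff₀ (by positivity), mul_comm]
      exact (ENNReal.ofReal_le_iff_le_toReal hbdd.measure_lt_top.ne).1
        (ofReal_pi_div_three_mul_sq_mul_dist_le_volume hΩ hs.le hball hx hy)
  rwa [le_div_iff₀ (by positivity), mul_comm] at hdiam

theorem sq_sSup_radius_le {X : Type*} [PseudoMetricSpace X] {Ω : Set X} {c : ℝ} (hc : 0 ≤ c)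
    (h : ∀ z s, 0 < s → closedBall z s ⊆ Ω → s ^ 2 ≤ c) :
    sSup {r : ℝ | 0 < r ∧ ∃ z, ball z r ⊆ Ω} ^ 2 ≤ c := by
  have hle : sSup {r : ℝ | 0 < r ∧ ∃ z, ball z r ⊆ Ω} ≤ √c := by
    refine Real.sSup_le (fun r ⟨_, z, hz⟩ => le_of_forall_lt_imp_le_of_dense fun s hsr => ?_)
      (sqrt_nonneg c)
    rcases le_or_gt s 0 with hs | hs
    · exact hs.trans (sqrt_nonneg c)
    exact (Real.le_sqrt hs.le hc).2 (h z s hs ((closedBall_subset_ball hsr).trans hz))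
  exact (Real.le_sqrt (Real.sSup_nonneg fun r hr => hr.1.le) hc).1 hle

theorem volume_ge_pi_div_three_inradius_sq_mul_diam_general
    (Ω : Set (EuclideanSpace ℝ (Fin 3)))
    (hconv : Convex ℝ Ω) (hbdd : Bornology.IsBounded Ω) :
    (volume Ω).toReal ≥
      (Real.pi / 3) * (sSup {r : ℝ | 0 < r ∧ ∃ z, Metric.ball z r ⊆ Ω}) ^ 2
        * Metric.diam Ω := by
  rcases (diam_nonneg (s := Ω)).eq_or_lt with hD | hD
  · rw [← hD, mul_zero]
    exact ENNReal.toReal_nonneg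
  have hρ := sq_sSup_radius_le (c := (volume Ω).toReal / (π / 3 * diam Ω)) (by positivity)
    fun z s hs hball => by
      rw [le_div_iff₀ (by positivity)]
      linarith [pi_div_three_mul_sq_mul_diam_le_toReal_volume hconv hbdd hs hball]
  rw [le_div_iff₀ (by positivity)] at hρ
  linarith

/-- For an open, convex, bounded set `Ω ⊂ ℝ³`,
`|Ω| ≥ (π/3) · r_in(Ω)² · diam(Ω)` where `r_in` is the inradius. -/
theorem volume_ge_pi_div_three_inradius_sq_mul_diam
    (Ω : Set (EuclideanSpace ℝ (Fin 3)))
    (hopen : IsOpen Ω) (hconv : Convex ℝ Ω) (hbdd : Bornology.IsBounded Ω) :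
    (volume Ω).toReal ≥
      (Real.pi / 3) * (sSup {r : ℝ | 0 < r ∧ ∃ z, Metric.ball z r ⊆ Ω}) ^ 2
        * Metric.diam Ω :=
  volume_ge_pi_div_three_inradius_sq_mul_diam_general Ω hconv hbdd
end

section
/- For every open convex bounded set Ω ⊂ ℝ³, any two points x, y ∈ Ω, and any ball B(z, r) ⊆ Ω, the volume of Ω is at least (π/3) r² |x - y|. (Key step in the inradius–diameter volume inequality: the convex hull of a disk of radius r centered at z orthogonal to the segment xy, together with x and y, is contained in Ω and has volume at least (π/3) r² |x−y|.) -/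
/-!
Let `D` be the disk `B(z, r) ∩ H`, where `H` is the plane through `z` orthogonal to `x - y`.
Slice `Ω` by the planes parallel to `H`. If `x` is at signed height `a` above `H`, then by
convexity the slice at height `t` strictly between `0` and `a` contains the image of `D` under the
homothety centred at `x` of ratio `1 - t / a`. Cavalieri's principle then yields the volume
`|a| · area(D) / 3` of the cone over `D` with apex `x`, and likewise for `y`. If `x` and `y` lie
on opposite sides of `H`, the two cones are disjoint and their heights add up to `|x - y|`;
otherwise one of them alone is that high. Everything works in any finite dimension, with
`area(D) / 3` replaced by `μHE[n - 1](D) / n`.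
-/

open MeasureTheory Set Metric Module Interval
open scoped ENNReal RealInnerProductSpace

theorem AffineMap.homothety_mem_mk' {k V : Type*} [CommRing k] [AddCommGroup V] [Module k V]
    {K : Submodule k V} {x z p v : V} {a c : k}
    (hx : x ∈ AffineSubspace.mk' (a • v +ᵥ z) K) (hp : p ∈ AffineSubspace.mk' z K) :
    AffineMap.homothety x c p ∈ AffineSubspace.mk' (((1 - c) * a) • v +ᵥ z) K := by
  rw [AffineSubspace.mem_mk'] at *
  have hdecomp : AffineMap.homothety x c p -ᵥ (((1 - c) * a) • v +ᵥ z)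
      = c • (p -ᵥ z) + (1 - c) • (x -ᵥ (a • v +ᵥ z)) := by
    simp only [AffineMap.homothety_apply, vsub_eq_sub, vadd_eq_add]
    module
  rw [hdecomp]
  exact K.add_mem (K.smul_mem c hp) (K.smul_mem _ hx)

theorem div_mem_Ioo_of_mem_uIoo {a t : ℝ} (ht : t ∈ uIoo 0 a) : t / a ∈ Ioo 0 1 := by
  rcases lt_trichotomy a 0 with ha | rfl | ha
  · simp only [uIoo, inf_of_le_right ha.le, sup_of_le_left ha.le, mem_Ioo] at ht
    exact ⟨div_pos_of_neg_of_neg ht.2 ha, (div_lt_one_of_neg ha).2 ht.1⟩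
  · simp [uIoo] at ht
  · simp only [uIoo, inf_of_le_left ha.le, sup_of_le_right ha.le, mem_Ioo] at ht
    exact ⟨div_pos ht.1 ha, (div_lt_one ha).2 ht.2⟩

theorem integral_one_sub_div_pow (a : ℝ) (d : ℕ) :
    ∫ t in (0 : ℝ)..a, (1 - t / a) ^ d = a / (d + 1) := by
  rcases eq_or_ne a 0 with rfl | ha
  · simp
  rw [intervalIntegral.integral_comp_div (fun s => (1 - s) ^ d) ha, zero_div, div_self ha,
    intervalIntegral.integral_comp_sub_left (fun s => s ^ d), integral_pow]
  simp [div_eq_mul_inv]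

theorem lintegral_uIoo_one_sub_div_pow (a : ℝ) (d : ℕ) :
    ∫⁻ t in uIoo 0 a, ENNReal.ofReal ((1 - t / a) ^ d) = ENNReal.ofReal |a| / (d + 1) := by
  have hnonneg : ∀ t ∈ uIoo 0 a, 0 ≤ (1 - t / a) ^ d := fun t ht =>
    pow_nonneg (sub_nonneg.2 (div_mem_Ioo_of_mem_uIoo ht).2.le) d
  have hint : IntegrableOn (fun t => (1 - t / a) ^ d) (uIoo 0 a) :=
    (by fun_prop : Continuous fun t : ℝ => (1 - t / a) ^ d).integrableOn_Icc.mono_set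
      Ioo_subset_Icc_self
  have hvalue : ∫ t in uIoo 0 a, (1 - t / a) ^ d = |a| / (d + 1) :=
    calc ∫ t in uIoo 0 a, (1 - t / a) ^ d
        = |∫ t in uIoo 0 a, (1 - t / a) ^ d| :=
          (abs_of_nonneg (setIntegral_nonneg measurableSet_Ioo hnonneg)).symm
      _ = |∫ t in Ι 0 a, (1 - t / a) ^ d| := congrArg _ (setIntegral_congr_set Ioo_ae_eq_Ioc)
      _ = |∫ t in (0 : ℝ)..a, (1 - t / a) ^ d| :=
          (intervalIntegral.abs_integral_eq_abs_integral_uIoc _).symm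
      _ = |a| / (d + 1) := by
          rw [integral_one_sub_div_pow, abs_div, abs_of_pos (by positivity : (0 : ℝ) < d + 1)]
  rw [← ofReal_integral_eq_lintegral_ofReal hint
    (ae_restrict_of_forall_mem measurableSet_Ioo hnonneg), hvalue,
    ENNReal.ofReal_div_of_pos (by positivity)]
  norm_cast

theorem ofReal_sub_mul_le_lintegral {f : ℝ → ℝ≥0∞} {m : ℝ≥0∞} {a b : ℝ}
    (ha : ENNReal.ofReal |a| * m ≤ ∫⁻ t in uIoo 0 a, f t)
    (hb : ENNReal.ofReal |b| * m ≤ ∫⁻ t in uIoo 0 b, f t) :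
    ENNReal.ofReal (a - b) * m ≤ ∫⁻ t, f t := by
  rcases lt_or_ge 0 b with hb0 | hb0
  · calc ENNReal.ofReal (a - b) * m ≤ ENNReal.ofReal |a| * m := by
          gcongr; linarith [le_abs_self a]
      _ ≤ ∫⁻ t, f t := ha.trans (setLIntegral_le_lintegral _ _)
  rcases lt_or_ge a 0 with ha0 | ha0
  · calc ENNReal.ofReal (a - b) * m ≤ ENNReal.ofReal |b| * m := by
          gcongr; linarith [neg_le_abs b]
      _ ≤ ∫⁻ t, f t := hb.trans (setLIntegral_le_lintegral _ _)
  have hdisj : Disjoint (uIoo 0 a) (uIoo 0 b) := by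
    simp only [uIoo, inf_of_le_left ha0, sup_of_le_right ha0, inf_of_le_right hb0,
      sup_of_le_left hb0]
    exact disjoint_left.2 fun t hta htb => lt_asymm hta.1 htb.2
  calc ENNReal.ofReal (a - b) * m = ENNReal.ofReal |a| * m + ENNReal.ofReal |b| * m := by
        rw [abs_of_nonneg ha0, abs_of_nonpos hb0, ← add_mul,
          ← ENNReal.ofReal_add ha0 (neg_nonneg.2 hb0), sub_eq_add_neg]
    _ ≤ (∫⁻ t in uIoo 0 a, f t) + ∫⁻ t in uIoo 0 b, f t := add_le_add ha hb
    _ = ∫⁻ t in uIoo 0 a ∪ uIoo 0 b, f t := (lintegral_union measurableSet_Ioo hdisj).symm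
    _ ≤ ∫⁻ t, f t := setLIntegral_le_lintegral _ _

section InnerProductSpace

variable {V : Type*} [NormedAddCommGroup V] [InnerProductSpace ℝ V]

theorem mem_mk'_inner_div_smul_vadd (z p v : V) :
    p ∈ AffineSubspace.mk' ((⟪v, p - z⟫ / ‖v‖ ^ 2) • v +ᵥ z) (ℝ ∙ v)ᗮ := by
  rw [AffineSubspace.mem_mk', vsub_eq_sub, vadd_eq_add,
    Submodule.mem_orthogonal_singleton_iff_inner_right, sub_add_eq_sub_sub_swap, inner_sub_right,
    real_inner_smul_right, real_inner_self_eq_norm_sq]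
  rcases eq_or_ne v 0 with rfl | hv
  · simp
  · field_simp
    ring

variable [MeasurableSpace V] [BorelSpace V]

theorem ofReal_mul_le_euclideanHausdorffMeasure_inter_mk' {Ω D : Set V} (hΩ : Convex ℝ Ω)
    {K : Submodule ℝ V} {x z v : V} {a t : ℝ} (hxΩ : x ∈ Ω)
    (hx : x ∈ AffineSubspace.mk' (a • v +ᵥ z) K) (hD : D ⊆ Ω ∩ AffineSubspace.mk' z K)
    (ht : t ∈ uIoo 0 a) (d : ℕ) :
    ENNReal.ofReal ((1 - t / a) ^ d) * μHE[d] D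
      ≤ μHE[d] (Ω ∩ AffineSubspace.mk' (t • v +ᵥ z) K) := by
  obtain ⟨hta0, hta1⟩ := div_mem_Ioo_of_mem_uIoo ht
  set c := 1 - t / a
  have hc0 : 0 < c := sub_pos.2 hta1
  have hca : (1 - c) * a = t := by
    have ha : a ≠ 0 := by rintro rfl; simp at hta0
    simp only [c, sub_sub_cancel, div_mul_cancel₀ t ha]
  have hsub : AffineMap.homothety x c '' D ⊆ Ω ∩ AffineSubspace.mk' (t • v +ᵥ z) K := by
    rintro _ ⟨p, hp, rfl⟩
    refine ⟨?_, hca ▸ AffineMap.homothety_mem_mk' hx (hD hp).2⟩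
    rw [AffineMap.homothety_apply, vsub_eq_sub, vadd_eq_add,
      show c • (p - x) + x = c • p + (1 - c) • x by module]
    exact hΩ (hD hp).1 hxΩ hc0.le (by simpa [c] using hta0.le) (add_sub_cancel c 1)
  calc ENNReal.ofReal (c ^ d) * μHE[d] D = μHE[d] (AffineMap.homothety x c '' D) := by
        rw [euclideanHausdorffMeasure_homothety_image d x hc0.ne', ENNReal.smul_def, smul_eq_mul,
          ENNReal.ofReal_pow hc0.le, ENNReal.coe_pow, Real.nnnorm_of_nonneg hc0.le,
          ENNReal.ofReal_eq_coe_nnreal hc0.le]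
    _ ≤ _ := measure_mono hsub

theorem ofReal_abs_mul_le_setLIntegral_uIoo {Ω D : Set V} (hΩ : Convex ℝ Ω)
    {K : Submodule ℝ V} {x z v : V} {a : ℝ} (hxΩ : x ∈ Ω)
    (hx : x ∈ AffineSubspace.mk' (a • v +ᵥ z) K) (hD : D ⊆ Ω ∩ AffineSubspace.mk' z K) (d : ℕ) :
    ENNReal.ofReal |a| * (μHE[d] D / (d + 1))
      ≤ ∫⁻ t in uIoo 0 a, μHE[d] (Ω ∩ AffineSubspace.mk' (t • v +ᵥ z) K) :=
  calc ENNReal.ofReal |a| * (μHE[d] D / (d + 1))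
      = ∫⁻ t in uIoo 0 a, ENNReal.ofReal ((1 - t / a) ^ d) * μHE[d] D := by
        rw [lintegral_mul_const _ (by fun_prop), lintegral_uIoo_one_sub_div_pow,
          ← mul_div_assoc, ENNReal.mul_div_right_comm]
    _ ≤ _ := setLIntegral_mono' measurableSet_Ioo fun t ht =>
        ofReal_mul_le_euclideanHausdorffMeasure_inter_mk' hΩ hxΩ hx hD ht d

theorem euclideanHausdorffMeasure_ball_inter_mk' (K : Submodule ℝ V) [FiniteDimensional ℝ K]
    (z : V) (r : ℝ) :
    μHE[finrank ℝ K] (ball z r ∩ AffineSubspace.mk' z K) = volume (ball (0 : K) r) := by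
  have hf : Isometry fun w : K => (w : V) + z :=
    (IsometryEquiv.addRight z).isometry.comp isometry_subtype_coe
  have himage : (fun w : K => (w : V) + z) '' ball 0 r = ball z r ∩ AffineSubspace.mk' z K := by
    ext p
    constructor
    · rintro ⟨w, hw, rfl⟩
      simpa [AffineSubspace.mem_mk', dist_eq_norm] using hw
    · rintro ⟨hpr, hpK⟩
      have hpK : p - z ∈ K := by simpa [AffineSubspace.mem_mk'] using hpK
      exact ⟨⟨p - z, hpK⟩, by simpa [dist_eq_norm] using hpr, sub_add_cancel p z⟩
  rw [← himage, hf.euclideanHausdorffMeasure_image,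
    InnerProductSpace.euclideanHausdorffMeasure_eq_volume]

theorem ofReal_dist_mul_le_volume [FiniteDimensional ℝ V] {Ω D : Set V} (hΩm : MeasurableSet Ω)
    (hΩ : Convex ℝ Ω) {x y z : V} (hx : x ∈ Ω) (hy : y ∈ Ω)
    (hD : D ⊆ Ω ∩ AffineSubspace.mk' z (ℝ ∙ (x - y))ᗮ) :
    ENNReal.ofReal (dist x y) * (μHE[finrank ℝ V - 1] D / finrank ℝ V) ≤ volume Ω := by
  rcases eq_or_ne x y with rfl | hxy
  · simp
  set v := x - y
  have hv : v ≠ 0 := sub_ne_zero.2 hxy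
  have hrank : ((finrank ℝ V - 1 : ℕ) : ℝ≥0∞) + 1 = finrank ℝ V := by
    have : 0 < finrank ℝ V := Module.finrank_pos_iff_exists_ne_zero.2 ⟨v, hv⟩
    norm_cast
    omega
  have hheights : ⟪v, x - z⟫ / ‖v‖ ^ 2 - ⟪v, y - z⟫ / ‖v‖ ^ 2 = 1 := by
    rw [← sub_div, ← inner_sub_right, sub_sub_sub_cancel_right, real_inner_self_eq_norm_sq,
      div_self (by positivity)]
  have hcones := ofReal_sub_mul_le_lintegral
    (ofReal_abs_mul_le_setLIntegral_uIoo hΩ hx (mem_mk'_inner_div_smul_vadd z x v) hD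
      (finrank ℝ V - 1))
    (ofReal_abs_mul_le_setLIntegral_uIoo hΩ hy (mem_mk'_inner_div_smul_vadd z y v) hD
      (finrank ℝ V - 1))
  rw [hheights, ENNReal.ofReal_one, one_mul, hrank] at hcones
  rw [← InnerProductSpace.euclideanHausdorffMeasure_eq_volume,
    EuclideanGeometry.euclideanHausdorffMeasure_eq_lintegral z hv hΩm, dist_eq_norm,
    ofReal_norm]
  gcongr

end InnerProductSpace

/-- For an open convex bounded set `Ω ⊂ ℝ³`, any two points `x, y ∈ Ω` and any ball
`B(z,r) ⊆ Ω` with `r > 0`, the volume of `Ω` is at least `(π/3) r² |x - y|`. -/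
theorem volume_ge_cone_volume
    (Ω : Set (EuclideanSpace ℝ (Fin 3)))
    (hopen : IsOpen Ω) (hconv : Convex ℝ Ω) (hbdd : Bornology.IsBounded Ω)
    (x y : EuclideanSpace ℝ (Fin 3)) (hx : x ∈ Ω) (hy : y ∈ Ω)
    (z : EuclideanSpace ℝ (Fin 3)) (r : ℝ) (hr : 0 < r)
    (hball : Metric.ball z r ⊆ Ω) :
    (volume Ω).toReal ≥ (Real.pi / 3) * r ^ 2 * dist x y := by
  rcases eq_or_ne x y with rfl | hxy
  · simp
  have : Fact (finrank ℝ (EuclideanSpace ℝ (Fin 3)) = 2 + 1) := ⟨by simp⟩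
  have hK : finrank ℝ (ℝ ∙ (x - y))ᗮ = 2 :=
    Submodule.finrank_orthogonal_span_singleton (sub_ne_zero.2 hxy)
  have : Nontrivial (ℝ ∙ (x - y))ᗮ := Module.nontrivial_of_finrank_eq_succ hK
  have hdisk := euclideanHausdorffMeasure_ball_inter_mk' (ℝ ∙ (x - y))ᗮ z r
  rw [InnerProductSpace.volume_ball_of_dim_even (k := 1) hK, hK, pow_one, Nat.factorial_one,
    Nat.cast_one, div_one] at hdisk
  have hcone := ofReal_dist_mul_le_volume (z := z) hopen.measurableSet hconv hx hy
    (inter_subset_inter_left _ hball)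
  rw [finrank_euclideanSpace_fin, show 3 - 1 = 2 from rfl, hdisk] at hcone
  rw [ge_iff_le, ← ENNReal.ofReal_le_iff_le_toReal hbdd.measure_lt_top.ne]
  refine le_of_eq_of_le ?_ hcone
  rw [Nat.cast_ofNat, ← ENNReal.ofReal_pow hr.le, ← ENNReal.ofReal_mul (by positivity),
    ← ENNReal.ofReal_ofNat 3, ← ENNReal.ofReal_div_of_pos (by norm_num),
    ← ENNReal.ofReal_mul dist_nonneg]
  ring_nf
end
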